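/- Let $\alpha\in H^2(\mathbb{T})$ be such that $\alpha'$ has at most a finite number of zeros on $\mathbb{T}$, and suppose $g\in H^1(\mathbb{T}^2)$ satisfies $\int_{\mathbb{T}}g(x_1,x_2)\,dx_1=0$ for a.e. $x_2\in\mathbb{T}$ and the eigenvalue equation $-\alpha(x_2)\,\partial_{x_1}g(x_1,x_2)=\lambda\,g(x_1,x_2)$ holds in $L^2(\mathbb{T}^2)$ for some $\lambda\in\mathbb{C}$. Then $g=0$. In other words, the skew-symmetric transport operator $Sg=-\tilde v\cdot\nabla g$ associated with the shear flow $\tilde v(x_1,x_2)=[\alpha(x_2),0]^\top$ has no eigenvectors in $H^1(\mathbb{T}^2)\cap X$ other than zero. -/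

import Mathlib

noncomputable section
open MeasureTheory Real Filter Topology

/-- Points of `ℝ^d`; the torus `𝕋^d = ℝ^d / 2πℤ^d` is modelled via `2π`-periodic
functions on `ℝ^d`. -/
abbrev Pt (d : ℕ) := EuclideanSpace ℝ (Fin d)

/-- A function on `ℝ^d` descends to the torus `𝕋^d`. -/
def IsPeriodic {d : ℕ} {E : Type*} (f : Pt d → E) : Prop :=
  ∀ (x : Pt d) (i : Fin d), f (x + (2 * π) • EuclideanSpace.single i (1 : ℝ)) = f x

/-- A fundamental domain for the torus. -/
def box (d : ℕ) : Set (Pt d) := {x | ∀ i, x i ∈ Set.Ico (0 : ℝ) (2 * π)}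

/-- Average of a scalar function over the torus. -/
def avg {d : ℕ} (f : Pt d → ℝ) : ℝ := (∫ x in box d, f x) / (2 * π) ^ d

/-- The `L²(𝕋^d)` norm. -/
def L2Norm {d : ℕ} {E : Type*} [NormedAddCommGroup E] (f : Pt d → E) : ℝ :=
  Real.sqrt (∫ x in box d, ‖f x‖ ^ 2)

/-- The Sobolev `H^k(𝕋^d)` norm. -/
def HNorm {d : ℕ} {E : Type*} [NormedAddCommGroup E] [NormedSpace ℝ E]
    (k : ℕ) (f : Pt d → E) : ℝ :=
  Real.sqrt (∑ i ∈ Finset.range (k + 1), ∫ x in box d, ‖iteratedFDeriv ℝ i f x‖ ^ 2)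

/-- Partial derivative `∂ᵢ f` of a scalar function. -/
def pd {d : ℕ} (i : Fin d) (f : Pt d → ℝ) (x : Pt d) : ℝ :=
  fderiv ℝ f x (EuclideanSpace.single i (1 : ℝ))

/-- Laplacian of a scalar function. -/
def lap {d : ℕ} (f : Pt d → ℝ) (x : Pt d) : ℝ := ∑ i, pd i (pd i f) x

/-- `(v · ∇) f` for a vector field `v` and a scalar function `f`. -/
def dotGrad {d : ℕ} (v : Pt d → Pt d) (f : Pt d → ℝ) (x : Pt d) : ℝ :=
  ∑ i, v x i * pd i f x

/-- A vector field is divergence free. -/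
def DivFree {d : ℕ} (v : Pt d → Pt d) : Prop :=
  ∀ x, (∑ i, pd i (fun y => v y i) x) = 0

/-- A vector field has zero average over the torus. -/
def ZeroAvgV {d : ℕ} (v : Pt d → Pt d) : Prop := ∀ i, (∫ x in box d, v x i) = 0

/-- Membership in `H^k(𝕋^d; E)` (classical-regularity encoding). -/
def MemH {d : ℕ} {E : Type*} [NormedAddCommGroup E] [NormedSpace ℝ E]
    (k : ℕ) (f : Pt d → E) : Prop := IsPeriodic f ∧ ContDiff ℝ k f

/-- Membership in the zero-average scalar Sobolev space `H^k` of the paper. -/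
def MemHs {d : ℕ} (k : ℕ) (f : Pt d → ℝ) : Prop :=
  MemH k f ∧ (∫ x in box d, f x) = 0

/-- Membership in `H^k_σ`: divergence-free, zero-average vector fields. -/
def MemHσ {d : ℕ} (k : ℕ) (v : Pt d → Pt d) : Prop :=
  MemH k v ∧ DivFree v ∧ ZeroAvgV v

/-- `f ∈ C(J; H^k)`: membership for each time together with continuity in the
`H^k` norm. -/
def ContInH {d : ℕ} {E : Type*} [NormedAddCommGroup E] [NormedSpace ℝ E]
    (k : ℕ) (J : Set ℝ) (f : ℝ → Pt d → E) : Prop :=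
  (∀ t ∈ J, MemH k (f t)) ∧
  ∀ t₀ ∈ J, Tendsto (fun t => HNorm k (fun x => f t x - f t₀ x)) (nhdsWithin t₀ J) (nhds 0)

/-- The `C(J_T; H^k)` norm: sup in time of the `H^k` norm. -/
def CHNorm {d : ℕ} {E : Type*} [NormedAddCommGroup E] [NormedSpace ℝ E]
    (k : ℕ) (T : ℝ) (f : ℝ → Pt d → E) : ℝ :=
  ⨆ t : Set.Icc (0 : ℝ) T, HNorm k (f t.1)

/-- The relaxation norm `|||v|||_{T,k} = sup_{t ∈ [0,T]} ‖∫_0^t v(s) ds‖_{H^k}`. -/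
def RelaxNorm {d : ℕ} {E : Type*} [NormedAddCommGroup E] [NormedSpace ℝ E]
    [CompleteSpace E] (k : ℕ) (T : ℝ) (f : ℝ → Pt d → E) : ℝ :=
  ⨆ t : Set.Icc (0 : ℝ) T, HNorm k (fun x => ∫ s in Set.Ioc (0 : ℝ) t.1, f s x)

/-- Build a point of `ℝ²` from two coordinates. -/
def pt2 (a b : ℝ) : Pt 2 := (EuclideanSpace.equiv (Fin 2) ℝ).symm ![a, b]


/-! On a horizontal line `x₂ = b` with `α b ≠ 0` the eigenvalue equation is the linear ODE
`h' = c h`, `c = -λ / α b`, for the `2π`-periodic slice `h = g (·, b)`, so `h s = exp (c s) h 0`.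
Periodicity forces `h = 0` unless `c ∈ iℤ`, and the zero mean excludes `c = 0`. Hence a slice
can survive only if `α b` lies in the countable set `{0} ∪ {iλ/n : n ≠ 0}`. Since `α'` has finitely
many zeros per period, `α` is locally injective off a countable set, so this happens only for
countably many `b`. The vanishing slices are therefore dense, and continuity gives `g = 0`. -/

open Complex in
lemma eq_exp_mul_of_hasDerivAt_eq_mul {h : ℝ → ℂ} {c : ℂ}
    (hh : ∀ s, HasDerivAt h (c * h s) s) (s : ℝ) : h s = exp (c * s) * h 0 := by
  have hF : ∀ t, HasDerivAt (fun t : ℝ => exp (-c * t) * h t) 0 t := fun t => by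
    have he := (((hasDerivAt_id t).ofReal_comp).const_mul (-c)).cexp
    exact (he.mul (hh t)).congr_deriv (by simp only [id_eq, ofReal_one]; ring)
  have hconst := is_const_of_deriv_eq_zero (fun t => (hF t).differentiableAt)
    (fun t => (hF t).deriv) s 0
  simp only [ofReal_zero, mul_zero, Complex.exp_zero, one_mul] at hconst
  rw [← hconst, ← mul_assoc, ← Complex.exp_add]
  simp

open Complex in
lemma eq_zero_of_hasDerivAt_eq_mul_of_periodic {h : ℝ → ℂ} {c : ℂ} {T : ℝ} (hT : 0 < T)
    (hh : ∀ s, HasDerivAt h (c * h s) s) (hper : Function.Periodic h T)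
    (hmean : ∫ s in Set.Ioc 0 T, h s = 0) (hc : ∀ n : ℤ, n ≠ 0 → c * T ≠ n * (2 * π * I)) :
    h = 0 := by
  have hexp := eq_exp_mul_of_hasDerivAt_eq_mul hh
  by_contra hne
  have h0 : h 0 ≠ 0 := fun h0 => hne (funext fun s => by simp [hexp s, h0])
  obtain ⟨n, hn⟩ : ∃ n : ℤ, c * T = n * (2 * π * I) := by
    refine exp_eq_one_iff.mp (mul_right_cancel₀ h0 ?_)
    rw [one_mul, ← hexp, ← zero_add T, hper]
  obtain rfl : n = 0 := by_contra fun hn0 => hc n hn0 hn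
  have hc0 : c = 0 := by simpa [hT.ne'] using hn
  have : ∫ s in Set.Ioc 0 T, h s = T • h 0 := by
    have hconst : ∀ s, h s = h 0 := fun s => by rw [hexp s, hc0]; simp
    rw [integral_congr_ae (ae_of_all _ hconst), setIntegral_const,
      Real.volume_real_Ioc_of_le hT.le, sub_zero]
  rw [hmean, eq_comm, smul_eq_zero] at this
  exact this.elim hT.ne' h0

lemma Set.OrdConnected.injOn_of_deriv_ne_zero {f : ℝ → ℝ} {s : Set ℝ} (hs : s.OrdConnected)
    (hf : ContinuousOn f s) (hd : ∀ x ∈ s, deriv f x ≠ 0) : s.InjOn f := by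
  have key : ∀ a ∈ s, ∀ b ∈ s, a < b → f a ≠ f b := fun a ha b hb hab heq => by
    obtain ⟨c, hc, hc0⟩ := exists_deriv_eq_zero hab (hf.mono (hs.out ha hb)) heq
    exact hd c (hs.out ha hb (Set.Ioo_subset_Icc_self hc)) hc0
  intro a ha b hb heq
  rcases lt_trichotomy a b with hab | hab | hab
  exacts [(key a ha b hb hab heq).elim, hab, (key b hb a ha hab heq.symm).elim]

lemma Set.Countable.preimage_of_countable_deriv_eq_zero {f : ℝ → ℝ} {S : Set ℝ}
    (hS : S.Countable) (hf : ContDiff ℝ 1 f) (hZ : {x | deriv f x = 0}.Countable) :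
    (f ⁻¹' S).Countable := by
  have hopen : IsOpen {x | deriv f x = 0}ᶜ :=
    (isClosed_eq (hf.continuous_deriv le_rfl) continuous_const).isOpen_compl
  have hloc : ∀ x ∈ f ⁻¹' S \ {x | deriv f x = 0},
      ∃ U ∈ 𝓝 x, U.OrdConnected ∧ U ⊆ {x | deriv f x = 0}ᶜ := fun x hx => by
    obtain ⟨ε, hε, hball⟩ := Metric.isOpen_iff.mp hopen x hx.2
    exact ⟨Metric.ball x ε, Metric.ball_mem_nhds x hε, by
      rw [Real.ball_eq_Ioo]; exact Set.ordConnected_Ioo, hball⟩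
  choose! U hU hUconn hUsub using hloc
  obtain ⟨t, hts, htc, hcover⟩ := TopologicalSpace.countable_cover_nhdsWithin
    (s := f ⁻¹' S \ {x | deriv f x = 0}) fun x hx => mem_nhdsWithin_of_mem_nhds (hU x hx)
  have hpiece : ∀ x ∈ t, (f ⁻¹' S ∩ U x).Countable := fun x hx =>
    (Set.mapsTo_preimage f S).mono_left Set.inter_subset_left |>.countable_of_injOn
      (((hUconn x (hts hx)).injOn_of_deriv_ne_zero hf.continuous.continuousOn
        fun y hy => hUsub x (hts hx) hy).mono Set.inter_subset_right) hS
  refine (hZ.union (htc.biUnion hpiece)).mono fun x hx => ?_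
  by_cases hx0 : deriv f x = 0
  · exact Or.inl hx0
  · obtain ⟨y, hy, hxy⟩ := Set.mem_iUnion₂.mp (hcover ⟨hx, hx0⟩)
    exact Or.inr (Set.mem_biUnion hy ⟨hx, hxy⟩)

lemma Function.Periodic.countable_setOf_deriv_eq_zero {f : ℝ → ℝ} {T : ℝ}
    (hf : Function.Periodic f T) (hT : 0 < T)
    (hZ : {x ∈ Set.Ico 0 T | deriv f x = 0}.Countable) : {x | deriv f x = 0}.Countable := by
  have hf' : Function.Periodic (deriv f) T := fun x => by
    rw [← deriv_comp_add_const, funext hf]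
  refine (Set.countable_iUnion fun n : ℤ => hZ.image (· + n • T)).mono fun x hx => ?_
  refine Set.mem_iUnion.mpr ⟨toIcoDiv hT 0 x, toIcoMod hT 0 x,
    ⟨toIcoMod_mem_Ico' hT x, ?_⟩, toIcoMod_add_toIcoDiv_zsmul hT 0 x⟩
  rw [← self_sub_toIcoDiv_zsmul, hf'.sub_zsmul_eq]
  exact hx

lemma pt2_apply_one (a b : ℝ) : pt2 a b 1 = b := rfl

lemma pt2_eta (x : Pt 2) : pt2 (x 0) (x 1) = x := by
  ext i; fin_cases i <;> rfl

lemma pt2_eq_add_smul_single_zero (a b : ℝ) :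
    pt2 a b = pt2 0 b + a • EuclideanSpace.single 0 (1 : ℝ) := by
  ext i; fin_cases i <;> simp [pt2]

lemma pt2_eq_add_smul_single_one (a b : ℝ) :
    pt2 a b = pt2 a 0 + b • EuclideanSpace.single 1 (1 : ℝ) := by
  ext i; fin_cases i <;> simp [pt2]

lemma continuous_pt2_right (a : ℝ) : Continuous (pt2 a) := by
  rw [show pt2 a = _ from funext (pt2_eq_add_smul_single_one a)]
  fun_prop

lemma hasDerivAt_pt2_left (a b : ℝ) :
    HasDerivAt (fun s => pt2 s b) (EuclideanSpace.single 0 (1 : ℝ)) a := by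
  rw [show (fun s => pt2 s b) = _ from funext (pt2_eq_add_smul_single_zero · b)]
  simpa using ((hasDerivAt_id a).smul_const (EuclideanSpace.single (0 : Fin 2) (1 : ℝ))).const_add
    (pt2 0 b)

section Slices

variable {E : Type*} {g : Pt 2 → E}

lemma IsPeriodic.periodic_comp_pt2_left (hg : IsPeriodic g) (b : ℝ) :
    Function.Periodic (fun s => g (pt2 s b)) (2 * π) := fun s => by
  dsimp only
  rw [pt2_eq_add_smul_single_zero (s + 2 * π), add_smul, ← add_assoc,
    ← pt2_eq_add_smul_single_zero]
  exact hg _ 0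

lemma hasDerivAt_comp_pt2_left [NormedAddCommGroup E] [NormedSpace ℝ E]
    (hg : Differentiable ℝ g) (a b : ℝ) :
    HasDerivAt (fun s => g (pt2 s b)) (fderiv ℝ g (pt2 a b) (EuclideanSpace.single 0 1)) a :=
  (hg _).hasFDerivAt.comp_hasDerivAt a (hasDerivAt_pt2_left a b)

lemma eq_zero_of_ae_comp_pt2_left_eq_zero [TopologicalSpace E] [T2Space E] [Zero E]
    (hg : Continuous g) (h : ∀ᵐ b, ∀ a, g (pt2 a b) = 0) (x : Pt 2) : g x = 0 := by
  have hslice : (fun b => g (pt2 (x 0) b)) = fun _ => 0 :=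
    (hg.comp (continuous_pt2_right _)).ext_on (Measure.dense_of_ae h) continuous_const
      fun b hb => hb (x 0)
  simpa [pt2_eta] using congrFun hslice (x 1)

end Slices

/-- Let `α ∈ H²(𝕋)` be such that `α'` has at most finitely
many zeros, and let `g ∈ H¹(𝕋²;ℂ)` have zero `x₁`-average for a.e. `x₂` and
satisfy `-α(x₂) ∂₁ g = λ g` in `L²(𝕋²)` for some `λ ∈ ℂ`.  Then `g = 0`:
the transport operator of the shear flow `(α(x₂), 0)` has no eigenvectors in
`H¹(𝕋²) ∩ X` other than zero. -/
theorem statement18 (α : ℝ → ℝ) (hα_per : ∀ s, α (s + 2 * π) = α s)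
    (hα_reg : ContDiff ℝ 2 α)
    (hα_zeros : {s ∈ Set.Ico (0 : ℝ) (2 * π) | deriv α s = 0}.Finite)
    (g : Pt 2 → ℂ) (hg_per : IsPeriodic g) (hg_reg : ContDiff ℝ 1 g)
    (hg_avg : ∀ᵐ x₂ : ℝ, (∫ s in Set.Ioc (0 : ℝ) (2 * π), g (pt2 s x₂)) = 0)
    (lam : ℂ)
    (heig : ∀ x : Pt 2,
      -((α (x 1) : ℂ) * fderiv ℝ g x (EuclideanSpace.single 0 (1 : ℝ))) =
        lam * g x) :
    ∀ x, g x = 0 := by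
  set S : Set ℝ := insert 0 (Set.range fun n : ℤ => (lam * Complex.I / n).re)
  have hS : (α ⁻¹' S).Countable :=
    ((Set.countable_range _).insert 0).preimage_of_countable_deriv_eq_zero
      (hα_reg.of_le one_le_two)
      (Function.Periodic.countable_setOf_deriv_eq_zero hα_per two_pi_pos hα_zeros.countable)
  refine eq_zero_of_ae_comp_pt2_left_eq_zero hg_reg.continuous ?_
  filter_upwards [hg_avg, hS.ae_notMem volume] with b hmean hb
  have hαb : (α b : ℂ) ≠ 0 :=
    Complex.ofReal_ne_zero.mpr fun h => hb (show α b ∈ S from h ▸ Set.mem_insert 0 _)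
  have hode : ∀ s, HasDerivAt (fun s => g (pt2 s b)) (-lam / α b * g (pt2 s b)) s := fun s => by
    refine (hasDerivAt_comp_pt2_left (hg_reg.differentiable one_ne_zero) s b).congr_deriv ?_
    have := heig (pt2 s b)
    rw [pt2_apply_one] at this
    field_simp
    linear_combination -this
  have hnonres : ∀ n : ℤ, n ≠ 0 → -lam / α b * (2 * π : ℝ) ≠ n * (2 * π * Complex.I) :=
    fun n hn hres => hb <| Or.inr ⟨n, by
      have h2π : ((2 * π : ℝ) : ℂ) ≠ 0 := by exact_mod_cast two_pi_pos.ne'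
      have : -lam / α b = n * Complex.I := mul_right_cancel₀ h2π (by rw [hres]; push_cast; ring)
      have : lam * Complex.I / n = α b := by
        field_simp at this ⊢
        linear_combination -Complex.I * this - α b * n * Complex.I_sq
      simp [this]⟩
  exact congrFun (eq_zero_of_hasDerivAt_eq_mul_of_periodic two_pi_pos hode
    (hg_per.periodic_comp_pt2_left b) hmean hnonres)
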